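/- (Case a > 0, b > 2.) Let a > 0, b > 2, α > 0, δ > 0, μ > 0, T > 0, and let q₁, q₂, p₁, p₂ : [0, T) → ℝ be differentiable functions satisfying the 2-peakon ODE system with parameters a, b, with initial data p₁(0) = α + δ, p₂(0) = −α, q₁(0) = 0, q₂(0) = μ. Suppose that for all t ∈ [0, T): p₁(t) > 0, p₂(t) < 0, 0 < q₂(t) − q₁(t) ≤ μ, and L_a(q₂(t) − q₁(t)) ≥ a, where L_a(r) = 1 − a − (1 − 3a)e^{−2r}. Then for all t ∈ [0, T): (p₂² − p₁²)′(t) < 0 and (q₂ − q₁)′(t) ≤ −a(2αδ + δ²) < 0. -/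

import Mathlib

open Real Set

/-- The 2-peakon ODE system with parameters `a`, `b`, holding (in the sense of derivatives
within `[0, T)`) at every point of `[0, T)`. `Real.sign` plays the role of `sgn`. -/
def PeakonODEOn (a b T : ℝ) (q₁ q₂ p₁ p₂ : ℝ → ℝ) : Prop :=
  ∀ t ∈ Set.Ico (0 : ℝ) T,
    HasDerivWithinAt q₁ ((1 - a) * p₁ t ^ 2 + 2 * p₁ t * p₂ t * Real.exp (-|q₁ t - q₂ t|)
      + (1 - 3 * a) * p₂ t ^ 2 * Real.exp (-(2 * |q₁ t - q₂ t|))) (Set.Ico 0 T) t ∧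
    HasDerivWithinAt q₂ ((1 - a) * p₂ t ^ 2 + 2 * p₁ t * p₂ t * Real.exp (-|q₁ t - q₂ t|)
      + (1 - 3 * a) * p₁ t ^ 2 * Real.exp (-(2 * |q₁ t - q₂ t|))) (Set.Ico 0 T) t ∧
    HasDerivWithinAt p₁ ((2 - b) * Real.sign (q₂ t - q₁ t) * p₁ t * p₂ t * Real.exp (-|q₁ t - q₂ t|)
      * (p₁ t + p₂ t * Real.exp (-|q₁ t - q₂ t|))) (Set.Ico 0 T) t ∧
    HasDerivWithinAt p₂ ((2 - b) * Real.sign (q₁ t - q₂ t) * p₁ t * p₂ t * Real.exp (-|q₁ t - q₂ t|)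
      * (p₁ t * Real.exp (-|q₁ t - q₂ t|) + p₂ t)) (Set.Ico 0 T) t

/-- `L_a(r) = 1 - a - (1 - 3a)e^{-2r}`. -/
noncomputable def Lfun (a r : ℝ) : ℝ := 1 - a - (1 - 3 * a) * Real.exp (-(2 * r))

theorem case1_collision (a b α δ μ T : ℝ)
    (ha : 0 < a) (hb : 2 < b) (hα : 0 < α) (hδ : 0 < δ) (hμ : 0 < μ) (hT : 0 < T)
    (q₁ q₂ p₁ p₂ : ℝ → ℝ)
    (hsys : PeakonODEOn a b T q₁ q₂ p₁ p₂)
    (hp₁0 : p₁ 0 = α + δ) (hp₂0 : p₂ 0 = -α) (hq₁0 : q₁ 0 = 0) (hq₂0 : q₂ 0 = μ)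
    (hp₁pos : ∀ t ∈ Set.Ico (0 : ℝ) T, 0 < p₁ t)
    (hp₂neg : ∀ t ∈ Set.Ico (0 : ℝ) T, p₂ t < 0)
    (hqrange : ∀ t ∈ Set.Ico (0 : ℝ) T, 0 < q₂ t - q₁ t ∧ q₂ t - q₁ t ≤ μ)
    (hL : ∀ t ∈ Set.Ico (0 : ℝ) T, a ≤ Lfun a (q₂ t - q₁ t)) :
    ∀ t ∈ Set.Ico (0 : ℝ) T,
      (∃ d : ℝ, HasDerivWithinAt (fun s => p₂ s ^ 2 - p₁ s ^ 2) d (Set.Ico 0 T) t ∧ d < 0) ∧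
      (∃ d : ℝ, HasDerivWithinAt (fun s => q₂ s - q₁ s) d (Set.Ico 0 T) t ∧
        d ≤ -(a * (2 * α * δ + δ ^ 2)) ∧ -(a * (2 * α * δ + δ ^ 2)) < 0) := by
  have hcpos : 0 < a * (2 * α * δ + δ ^ 2) := by positivity
  have habs : ∀ t ∈ Set.Ico (0:ℝ) T, |q₁ t - q₂ t| = q₂ t - q₁ t := by
    intro t ht
    rw [abs_sub_comm, abs_of_pos (hqrange t ht).1]
  -- derivative of p₂² - p₁²
  have hfderiv : ∀ t ∈ Set.Ico (0:ℝ) T,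
      HasDerivWithinAt (fun s => p₂ s ^ 2 - p₁ s ^ 2)
        (2 * (b - 2) * p₁ t * p₂ t * Real.exp (-(q₂ t - q₁ t)) *
          (p₁ t ^ 2 + p₂ t ^ 2 + 2 * p₁ t * p₂ t * Real.exp (-(q₂ t - q₁ t))))
        (Set.Ico 0 T) t := by
    intro t ht
    obtain ⟨hq1, hq2, hp1, hp2⟩ := hsys t ht
    have hQ := (hqrange t ht).1
    have hs1 : Real.sign (q₂ t - q₁ t) = 1 := Real.sign_of_pos hQ
    have hs2 : Real.sign (q₁ t - q₂ t) = -1 := Real.sign_of_neg (by linarith)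
    have hab := habs t ht
    have H : HasDerivWithinAt (fun s => p₂ s ^ 2 - p₁ s ^ 2) _ (Set.Ico 0 T) t :=
      (hp2.pow 2).sub (hp1.pow 2)
    convert H using 1
    rw [hs1, hs2, hab]
    push_cast
    ring
  -- negativity of that derivative
  have hfneg : ∀ t ∈ Set.Ico (0:ℝ) T,
      2 * (b - 2) * p₁ t * p₂ t * Real.exp (-(q₂ t - q₁ t)) *
        (p₁ t ^ 2 + p₂ t ^ 2 + 2 * p₁ t * p₂ t * Real.exp (-(q₂ t - q₁ t))) < 0 := by
    intro t ht
    have hQ := (hqrange t ht).1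
    have h1 := hp₁pos t ht
    have h2 := hp₂neg t ht
    set E := Real.exp (-(q₂ t - q₁ t)) with hE
    have hEpos : 0 < E := Real.exp_pos _
    have hElt : E < 1 := by
      rw [hE, Real.exp_lt_one_iff]; linarith
    have hfac : 0 < p₁ t ^ 2 + p₂ t ^ 2 + 2 * p₁ t * p₂ t * E := by
      nlinarith [sq_nonneg (p₁ t + p₂ t), mul_pos h1 (neg_pos.2 h2)]
    have heq : 2 * (b - 2) * p₁ t * p₂ t * E = (2 * (b - 2) * p₁ t * E) * p₂ t := by ring
    have : 2 * (b - 2) * p₁ t * p₂ t * E < 0 := by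
      rw [heq]
      exact mul_neg_of_pos_of_neg
        (mul_pos (mul_pos (by linarith : (0:ℝ) < 2 * (b - 2)) h1) hEpos) h2
    exact mul_neg_of_neg_of_pos this hfac
  -- p₂² - p₁² is strictly antitone, so bounded by its initial value
  have hanti : StrictAntiOn (fun s => p₂ s ^ 2 - p₁ s ^ 2) (Set.Ico 0 T) := by
    apply strictAntiOn_of_deriv_neg (convex_Ico 0 T)
    · intro t ht
      exact (hfderiv t ht).continuousWithinAt
    · intro t ht
      rw [interior_Ico] at ht
      have ht' : t ∈ Set.Ico (0:ℝ) T := Ioo_subset_Ico_self ht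
      have hmem : Set.Ico (0:ℝ) T ∈ nhds t := Ico_mem_nhds ht.1 ht.2
      have := ((hfderiv t ht').hasDerivAt hmem).deriv
      rw [this]
      exact hfneg t ht'
  have hbound : ∀ t ∈ Set.Ico (0:ℝ) T,
      p₂ t ^ 2 - p₁ t ^ 2 ≤ -(2 * α * δ + δ ^ 2) := by
    intro t ht
    have h0 : (0:ℝ) ∈ Set.Ico (0:ℝ) T := ⟨le_refl 0, hT⟩
    have hf0 : p₂ 0 ^ 2 - p₁ 0 ^ 2 = -(2 * α * δ + δ ^ 2) := by
      rw [hp₁0, hp₂0]; ring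
    rcases eq_or_lt_of_le ht.1 with h | h
    · rw [← h, hf0]
    · have := hanti h0 ht h
      simp only at this
      linarith [hf0 ▸ this]
  intro t ht
  have hfd := hfderiv t ht
  have hfn := hfneg t ht
  constructor
  · exact ⟨_, hfd, hfn⟩
  · obtain ⟨hq1, hq2, hp1, hp2⟩ := hsys t ht
    have hab := habs t ht
    refine ⟨_, hq2.sub hq1, ?_, by linarith⟩
    have hLt := hL t ht
    have hbt := hbound t ht
    rw [hab]
    have hkey : ((1 - a) * p₂ t ^ 2 + 2 * p₁ t * p₂ t * Real.exp (-(q₂ t - q₁ t))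
        + (1 - 3 * a) * p₁ t ^ 2 * Real.exp (-(2 * (q₂ t - q₁ t)))) -
        ((1 - a) * p₁ t ^ 2 + 2 * p₁ t * p₂ t * Real.exp (-(q₂ t - q₁ t))
        + (1 - 3 * a) * p₂ t ^ 2 * Real.exp (-(2 * (q₂ t - q₁ t))))
        = (p₂ t ^ 2 - p₁ t ^ 2) * Lfun a (q₂ t - q₁ t) := by
      unfold Lfun; ring
    rw [hkey]
    have hneg : p₂ t ^ 2 - p₁ t ^ 2 < 0 := by nlinarith
    calc (p₂ t ^ 2 - p₁ t ^ 2) * Lfun a (q₂ t - q₁ t)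
        ≤ (p₂ t ^ 2 - p₁ t ^ 2) * a := by
          apply mul_le_mul_of_nonpos_left hLt (le_of_lt hneg)
      _ ≤ -(a * (2 * α * δ + δ ^ 2)) := by nlinarith
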